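/- Let n ≥ 1 and let h : ℝⁿ → ℝⁿ be a diffeomorphism that is orientation-preserving (the determinant of its derivative is everywhere positive). Then h is smoothly isotopic to the identity: there is a smooth map H : ℝⁿ × [0,1] → ℝⁿ such that H(·,0) = h, H(·,1) = id, and H(·,t) is a diffeomorphism of ℝⁿ for every t ∈ [0,1]. -/

import Mathlib

open Set Function Metric

noncomputable section

/-- Euclidean `n`-space. -/
abbrev E (n : ℕ) : Type := EuclideanSpace ℝ (Fin n)

/-- A diffeomorphism of `ℝⁿ`: a smooth bijection with smooth inverse. -/
def IsDiffeo {n : ℕ} (g : E n → E n) : Prop :=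
  ContDiff ℝ (⊤ : ℕ∞) g ∧ ∃ g' : E n → E n, ContDiff ℝ (⊤ : ℕ∞) g' ∧
    Function.LeftInverse g' g ∧ Function.RightInverse g' g

/-!
For `s ≠ 0` the map `h_s x = s⁻¹ • (h (s • x) - h 0)` is a diffeomorphism, and by Hadamard's lemma
`(x, s) ↦ h_s x` extends smoothly to `s = 0` by the derivative `A = Dh(0)`; this joins `h` to `A`.
Since `det A > 0`, `A` is joined to the identity by a smooth path `Γ` of invertible linear maps:
write its matrix as transvections times a diagonal matrix, shrink the transvections to the
identity, move the absolute values of the diagonal entries to `1` along segments, and cancel the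
negative entries in pairs by rotations through `π` in coordinate planes. Running both deformations
at once gives `H (x, t) = Γ t (A⁻¹ (h_{1-t} x)) + (1 - t) • h 0`.
-/

open MeasureTheory Matrix
open scoped ContDiff

universe u

section ParametricIntegral

-- `P` and `F` share a universe so that the induction in `contDiff_intervalIntegral` can pass
-- from `F` to `P →L[ℝ] F`.
variable {P F : Type u} [NormedAddCommGroup P] [NormedSpace ℝ P] [ProperSpace P]
  [NormedAddCommGroup F] [NormedSpace ℝ F]

theorem hasFDerivAt_intervalIntegral_of_contDiff {G : P × ℝ → F} (hG : ContDiff ℝ 1 G)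
    (a b : ℝ) (p₀ : P) :
    HasFDerivAt (fun p => ∫ u in a..b, G (p, u))
      (∫ u in a..b, fderiv ℝ G (p₀, u) ∘L .inl ℝ P ℝ) p₀ := by
  have hG' : Continuous fun q => fderiv ℝ G q ∘L .inl ℝ P ℝ :=
    (hG.continuous_fderiv one_ne_zero).clm_comp continuous_const
  obtain ⟨C, hC⟩ := ((isCompact_closedBall p₀ 1).prod isCompact_uIcc).exists_bound_of_continuousOn
    hG'.continuousOn
  refine intervalIntegral.hasFDerivAt_integral_of_dominated_of_fderiv_le (F := fun p u => G (p, u))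
    (F' := fun p u => fderiv ℝ G (p, u) ∘L .inl ℝ P ℝ) (bound := fun _ => C)
    (ball_mem_nhds p₀ one_pos) ?_ ?_ ?_ ?_ intervalIntegrable_const ?_
  · exact .of_forall fun p => (hG.continuous.comp (.prodMk_right p)).aestronglyMeasurable
  · exact (hG.continuous.comp (.prodMk_right p₀)).intervalIntegrable a b
  · exact (hG'.comp (.prodMk_right p₀)).aestronglyMeasurable
  · exact .of_forall fun u hu p hp =>
      hC (p, u) ⟨ball_subset_closedBall hp, uIoc_subset_uIcc hu⟩
  · refine .of_forall fun u _ p _ => ?_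
    exact (hG.differentiable one_ne_zero (p, u)).hasFDerivAt.comp p (hasFDerivAt_prodMk_left p u)

theorem contDiff_intervalIntegral {G : P × ℝ → F} (hG : ContDiff ℝ ∞ G) (a b : ℝ) :
    ContDiff ℝ ∞ fun p => ∫ u in a..b, G (p, u) := by
  refine contDiff_infty.mpr fun m => ?_
  induction m generalizing F with
  | zero =>
    exact contDiff_zero.mpr <| continuous_iff_continuousAt.mpr fun p =>
      (hasFDerivAt_intervalIntegral_of_contDiff (hG.of_le (by simp)) a b p).continuousAt
  | succ m ih =>
    have hderiv := hasFDerivAt_intervalIntegral_of_contDiff (hG.of_le (by simp)) a b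
    rw [Nat.cast_succ, contDiff_succ_iff_fderiv]
    refine ⟨fun p => (hderiv p).differentiableAt, by simp, ?_⟩
    rw [funext fun p => (hderiv p).fderiv]
    exact ih ((hG.fderiv_right le_rfl).clm_comp
      (contDiff_const (c := ContinuousLinearMap.inl ℝ P ℝ)))

end ParametricIntegral

section LinearizationHomotopy

variable {V F : Type u} [NormedAddCommGroup V] [NormedSpace ℝ V]
  [NormedAddCommGroup F] [NormedSpace ℝ F]

/-- By Hadamard's lemma this is `s⁻¹ • (f (s • x) - f 0)` for `s ≠ 0`; the integral form makes it
smooth across `s = 0`, where it is `fderiv ℝ f 0 x`. -/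
def linearizationHomotopy (f : V → F) (p : V × ℝ) : F :=
  ∫ u in (0:ℝ)..1, fderiv ℝ f (u • p.2 • p.1) p.1

theorem linearizationHomotopy_zero [CompleteSpace F] (f : V → F) (x : V) :
    linearizationHomotopy f (x, 0) = fderiv ℝ f 0 x := by
  simp [linearizationHomotopy]

theorem smul_linearizationHomotopy [CompleteSpace F] {f : V → F} (hf : ContDiff ℝ 1 f) (x : V) (s : ℝ) :
    s • linearizationHomotopy f (x, s) = f (s • x) - f 0 := by
  have hderiv : ∀ u : ℝ,
      HasDerivAt (fun u : ℝ => f (u • s • x)) (fderiv ℝ f (u • s • x) (s • x)) u :=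
    fun u => (hf.differentiable one_ne_zero _).hasFDerivAt.comp_hasDerivAt u
      (by simpa using (hasDerivAt_id u).smul_const (s • x))
  have hcont : Continuous fun u : ℝ => fderiv ℝ f (u • s • x) (s • x) := by fun_prop
  rw [linearizationHomotopy, ← intervalIntegral.integral_smul]
  simp_rw [← map_smul]
  rw [intervalIntegral.integral_eq_sub_of_hasDerivAt (fun u _ => hderiv u)
    (hcont.intervalIntegrable 0 1)]
  simp

theorem linearizationHomotopy_of_ne_zero [CompleteSpace F] {f : V → F} (hf : ContDiff ℝ 1 f) (x : V) {s : ℝ}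
    (hs : s ≠ 0) : linearizationHomotopy f (x, s) = s⁻¹ • (f (s • x) - f 0) := by
  rw [← smul_linearizationHomotopy hf, inv_smul_smul₀ hs]

theorem contDiff_linearizationHomotopy [FiniteDimensional ℝ V] {f : V → F}
    (hf : ContDiff ℝ ∞ f) : ContDiff ℝ ∞ (linearizationHomotopy f) :=
  contDiff_intervalIntegral (G := fun q : (V × ℝ) × ℝ => fderiv ℝ f (q.2 • q.1.2 • q.1.1) q.1.1)
    (by fun_prop) 0 1

end LinearizationHomotopy

section PlaneRotation

variable {ι : Type*} [DecidableEq ι] (a b : ι)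

def planeProjection : Matrix ι ι ℝ := single a a 1 + single b b 1

def planeQuarterTurn : Matrix ι ι ℝ := single a b 1 - single b a 1

def planeRotation (θ : ℝ) : Matrix ι ι ℝ :=
  1 + (Real.cos θ - 1) • planeProjection a b + Real.sin θ • planeQuarterTurn a b

variable {a b}

theorem planeRotation_zero : planeRotation a b 0 = 1 := by
  simp [planeRotation]

theorem planeRotation_pi (hab : a ≠ b) :
    planeRotation a b Real.pi =
      diagonal fun i => (if i = a then -1 else 1) * (if i = b then -1 else 1) := by
  ext i j
  by_cases hia : i = a <;> by_cases hib : i = b <;> by_cases hij : i = j <;>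
    simp_all [planeRotation, planeProjection, single_apply, one_apply, eq_comm]

variable [Fintype ι]

theorem planeProjection_mul_planeProjection (hab : a ≠ b) :
    planeProjection a b * planeProjection a b = planeProjection a b := by
  simp only [planeProjection, add_mul, mul_add, single_mul_single_same]
  rw [single_mul_single_of_ne (h := hab), single_mul_single_of_ne (h := hab.symm)]
  simp

theorem planeProjection_mul_planeQuarterTurn (hab : a ≠ b) :
    planeProjection a b * planeQuarterTurn a b = planeQuarterTurn a b := by
  simp only [planeProjection, planeQuarterTurn, add_mul, mul_sub, single_mul_single_same]
  rw [single_mul_single_of_ne (h := hab), single_mul_single_of_ne (h := hab.symm)]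
  simp

theorem planeQuarterTurn_mul_planeProjection (hab : a ≠ b) :
    planeQuarterTurn a b * planeProjection a b = planeQuarterTurn a b := by
  simp only [planeProjection, planeQuarterTurn, sub_mul, mul_add, single_mul_single_same]
  rw [single_mul_single_of_ne (h := hab), single_mul_single_of_ne (h := hab.symm)]
  simp only [mul_one]
  abel

theorem planeQuarterTurn_mul_self (hab : a ≠ b) :
    planeQuarterTurn a b * planeQuarterTurn a b = -planeProjection a b := by
  simp only [planeProjection, planeQuarterTurn, sub_mul, mul_sub, single_mul_single_same]
  rw [single_mul_single_of_ne (h := hab), single_mul_single_of_ne (h := hab.symm)]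
  simp only [mul_one, sub_zero, zero_sub]
  abel

theorem planeRotation_mul (hab : a ≠ b) (θ φ : ℝ) :
    planeRotation a b θ * planeRotation a b φ = planeRotation a b (θ + φ) := by
  simp only [planeRotation, add_mul, mul_add, one_mul, mul_one, smul_mul_assoc, mul_smul_comm,
    planeProjection_mul_planeProjection hab, planeProjection_mul_planeQuarterTurn hab,
    planeQuarterTurn_mul_planeProjection hab, planeQuarterTurn_mul_self hab, Real.cos_add,
    Real.sin_add]
  module

theorem isUnit_planeRotation (hab : a ≠ b) (θ : ℝ) : IsUnit (planeRotation a b θ) :=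
  isUnit_iff_exists.mpr ⟨planeRotation a b (-θ),
    by simp [planeRotation_mul hab, planeRotation_zero],
    by simp [planeRotation_mul hab, planeRotation_zero]⟩

end PlaneRotation

section SmoothPathsOfMatrices

variable {ι : Type*} [Fintype ι] [DecidableEq ι]

def JoinedToOneSmoothly (M : Matrix ι ι ℝ) : Prop :=
  ∃ γ : ℝ → Matrix ι ι ℝ, (∀ i j, ContDiff ℝ ∞ fun t => γ t i j) ∧ γ 0 = M ∧ γ 1 = 1 ∧
    ∀ t ∈ Icc (0:ℝ) 1, IsUnit (γ t)

theorem joinedToOneSmoothly_one : JoinedToOneSmoothly (1 : Matrix ι ι ℝ) :=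
  ⟨fun _ => 1, fun _ _ => contDiff_const, rfl, rfl, fun _ _ => isUnit_one⟩

theorem JoinedToOneSmoothly.mul {M N : Matrix ι ι ℝ} (hM : JoinedToOneSmoothly M)
    (hN : JoinedToOneSmoothly N) : JoinedToOneSmoothly (M * N) := by
  obtain ⟨γ, hγ, hγ0, hγ1, hγu⟩ := hM
  obtain ⟨δ, hδ, hδ0, hδ1, hδu⟩ := hN
  refine ⟨fun t => γ t * δ t, fun i j => ?_, by simp [hγ0, hδ0], by simp [hγ1, hδ1],
    fun t ht => (hγu t ht).mul (hδu t ht)⟩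
  simp only [mul_apply]
  exact ContDiff.sum fun k _ => (hγ i k).mul (hδ k j)

theorem joinedToOneSmoothly_list_prod {L : List (Matrix ι ι ℝ)}
    (hL : ∀ M ∈ L, JoinedToOneSmoothly M) : JoinedToOneSmoothly L.prod := by
  induction L with
  | nil => exact joinedToOneSmoothly_one
  | cons M L ih =>
    rw [List.prod_cons]
    exact (hL M List.mem_cons_self).mul (ih fun N hN => hL N (List.mem_cons_of_mem M hN))

theorem joinedToOneSmoothly_transvection (t : TransvectionStruct ι ℝ) :
    JoinedToOneSmoothly t.toMatrix := by
  refine ⟨fun s => transvection t.i t.j ((1 - s) * t.c), fun i j => ?_,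
    by simp [TransvectionStruct.toMatrix], by simp [transvection_zero], fun s _ => ?_⟩
  · simp only [transvection, Matrix.add_apply, Matrix.single_apply, Matrix.one_apply]
    split_ifs <;> fun_prop
  · rw [isUnit_iff_isUnit_det, det_transvection_of_ne _ _ t.hij]
    exact isUnit_one

theorem joinedToOneSmoothly_diagonal_of_pos {d : ι → ℝ} (hd : ∀ i, 0 < d i) :
    JoinedToOneSmoothly (diagonal d) := by
  refine ⟨fun t => diagonal fun i => (1 - t) * d i + t, fun i j => ?_, by simp, by simp,
    fun t ht => ?_⟩
  · simp only [diagonal_apply]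
    split_ifs <;> fun_prop
  · rw [isUnit_iff_isUnit_det, det_diagonal, isUnit_iff_ne_zero]
    refine Finset.prod_ne_zero_iff.mpr fun i _ => (?_ : 0 < (1 - t) * d i + t).ne'
    rcases ht.1.eq_or_lt with rfl | ht0
    · simpa using hd i
    · exact add_pos_of_nonneg_of_pos (mul_nonneg (sub_nonneg.2 ht.2) (hd i).le) ht0


theorem joinedToOneSmoothly_planeRotation {a b : ι} (hab : a ≠ b) (θ : ℝ) :
    JoinedToOneSmoothly (planeRotation a b θ) := by
  refine ⟨fun t => planeRotation a b ((1 - t) * θ), fun i j => ?_, by simp,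
    by simp [planeRotation_zero], fun t _ => isUnit_planeRotation hab _⟩
  simp only [planeRotation, Matrix.add_apply, Matrix.smul_apply, smul_eq_mul]
  fun_prop

theorem joinedToOneSmoothly_diagonal {d : ι → ℝ} (hd : 0 < ∏ i, d i) :
    JoinedToOneSmoothly (diagonal d) := by
  induction hk : (Finset.univ.filter fun i => d i < 0).card using Nat.strong_induction_on
    generalizing d with
  | _ k ih =>
  by_cases hneg : ∃ a, d a < 0
  · obtain ⟨a, ha⟩ := hneg
    -- the product is positive, so a second coordinate is negative
    obtain ⟨b, hba, hb⟩ : ∃ b, b ≠ a ∧ d b < 0 := by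
      by_contra! hpos
      have hrest : 0 ≤ ∏ i ∈ Finset.univ.erase a, d i :=
        Finset.prod_nonneg fun i hi => hpos i (Finset.ne_of_mem_erase hi)
      rw [← Finset.mul_prod_erase _ _ (Finset.mem_univ a)] at hd
      nlinarith
    obtain ⟨e, he⟩ : ∃ e : ι → ℝ,
        e = fun i => (if i = a then -1 else 1) * (if i = b then -1 else 1) := ⟨_, rfl⟩
    have he_sq : ∀ i, e i * e i = 1 := fun i => by simp only [he]; split_ifs <;> norm_num
    have hprod_e : ∏ i, e i = 1 := by
      rw [he, Finset.prod_mul_distrib]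
      simp [Finset.prod_ite_eq']
    have hsplit : diagonal d = diagonal (d * e) * planeRotation a b Real.pi := by
      rw [planeRotation_pi hba.symm, ← he, diagonal_mul_diagonal]
      congr 1
      funext i
      rw [Pi.mul_apply, mul_assoc, he_sq, mul_one]
    have hcard : (Finset.univ.filter fun i => (d * e) i < 0).card < k := by
      rw [← hk]
      refine Finset.card_lt_card (Finset.ssubset_iff_of_subset ?_ |>.mpr ⟨a, ?_, ?_⟩)
      · intro i
        by_cases hia : i = a <;> by_cases hib : i = b <;> simp_all
      · simpa using ha
      · simp [he, hba.symm, ha.le]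
    rw [hsplit]
    refine (ih _ hcard ?_ rfl).mul (joinedToOneSmoothly_planeRotation hba.symm _)
    simpa only [Pi.mul_apply, Finset.prod_mul_distrib, hprod_e, mul_one] using hd
  · push Not at hneg
    exact joinedToOneSmoothly_diagonal_of_pos fun i => (hneg i).lt_of_ne'
      (Finset.prod_ne_zero_iff.mp hd.ne' i (Finset.mem_univ i))

theorem joinedToOneSmoothly_of_det_pos {M : Matrix ι ι ℝ} (hM : 0 < M.det) :
    JoinedToOneSmoothly M := by
  obtain ⟨L, L', d, rfl⟩ := Pivot.exists_list_transvec_mul_diagonal_mul_list_transvec M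
  simp only [det_mul, TransvectionStruct.det_toMatrix_prod, det_diagonal, one_mul, mul_one] at hM
  have hL : ∀ L : List (TransvectionStruct ι ℝ),
      JoinedToOneSmoothly (L.map TransvectionStruct.toMatrix).prod := fun L =>
    joinedToOneSmoothly_list_prod (by simpa using fun t _ => joinedToOneSmoothly_transvection t)
  exact ((hL L).mul (joinedToOneSmoothly_diagonal hM)).mul (hL L')

end SmoothPathsOfMatrices

theorem exists_contDiff_path_isUnit_of_det_pos {ι : Type*} [Fintype ι] [DecidableEq ι]
    (A : EuclideanSpace ℝ ι →L[ℝ] EuclideanSpace ℝ ι) (hA : 0 < A.det) :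
    ∃ Γ : ℝ → (EuclideanSpace ℝ ι →L[ℝ] EuclideanSpace ℝ ι), ContDiff ℝ ∞ Γ ∧ Γ 0 = A ∧
      Γ 1 = 1 ∧ ∀ t ∈ Icc (0:ℝ) 1, IsUnit (Γ t) := by
  set M := (toEuclideanCLM (𝕜 := ℝ) (n := ι)).symm A
  have hAM : toEuclideanCLM (𝕜 := ℝ) M = A := StarAlgEquiv.apply_symm_apply _ A
  have hdet : 0 < M.det := hA.trans_eq (by rw [← hAM]; exact LinearMap.det_toLpLin 2 M)
  obtain ⟨γ, hγ, hγ0, hγ1, hγu⟩ := joinedToOneSmoothly_of_det_pos hdet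
  refine ⟨fun t => toEuclideanCLM (𝕜 := ℝ) (γ t), ?_, by simp [hγ0, hAM], by simp [hγ1],
    fun t ht => (hγu t ht).map _⟩
  have hsum : (fun t => toEuclideanCLM (𝕜 := ℝ) (γ t)) =
      fun t => ∑ i, ∑ j, γ t i j • toEuclideanCLM (𝕜 := ℝ) (single i j 1) := by
    funext t
    conv_lhs => rw [matrix_eq_sum_single (γ t)]
    simp [map_sum, ← map_smul, smul_single]
  rw [hsum]
  exact ContDiff.sum fun i _ => ContDiff.sum fun j _ => (hγ i j).smul contDiff_const

section Diffeomorphisms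

variable {n : ℕ}

theorem isDiffeo_id : IsDiffeo (id : E n → E n) :=
  ⟨contDiff_id, id, contDiff_id, fun _ => rfl, fun _ => rfl⟩

theorem IsDiffeo.comp {f g : E n → E n} (hf : IsDiffeo f) (hg : IsDiffeo g) :
    IsDiffeo (f ∘ g) := by
  obtain ⟨hf, f', hf', hff', hf'f⟩ := hf
  obtain ⟨hg, g', hg', hgg', hg'g⟩ := hg
  exact ⟨hf.comp hg, g' ∘ f', hg'.comp hf', fun x => by simp [hff' _, hgg' _],
    fun y => by simp [hf'f _, hg'g _]⟩

theorem isDiffeo_of_isUnit {L : E n →L[ℝ] E n} (hL : IsUnit L) : IsDiffeo L := by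
  obtain ⟨U, rfl⟩ := hL
  let e := ContinuousLinearEquiv.unitsEquiv ℝ (E n) U
  exact ⟨e.contDiff, e.symm, e.symm.contDiff, e.symm_apply_apply, e.apply_symm_apply⟩

theorem isDiffeo_add_const (c : E n) : IsDiffeo (· + c) :=
  ⟨contDiff_id.add contDiff_const, (· - c), contDiff_id.sub contDiff_const,
    fun x => add_sub_cancel_right x c, fun x => sub_add_cancel x c⟩

theorem isDiffeo_const_smul {s : ℝ} (hs : s ≠ 0) : IsDiffeo fun x : E n => s • x :=
  ⟨contDiff_const_smul s, (s⁻¹ • ·), contDiff_const_smul _, fun x => inv_smul_smul₀ hs x,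
    fun x => smul_inv_smul₀ hs x⟩

theorem IsDiffeo.rescale {h : E n → E n} (hh : IsDiffeo h) {s : ℝ} (hs : s ≠ 0) :
    IsDiffeo fun x => s⁻¹ • (h (s • x) - h 0) := by
  have hcomp : (fun x => s⁻¹ • (h (s • x) - h 0)) = (s⁻¹ • ·) ∘ (· + -h 0) ∘ h ∘ (s • ·) := by
    funext x
    simp [sub_eq_add_neg]
  rw [hcomp]
  exact (isDiffeo_const_smul (inv_ne_zero hs)).comp <| (isDiffeo_add_const _).comp <|
    hh.comp (isDiffeo_const_smul hs)

end Diffeomorphisms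

theorem statement18_general (n : ℕ) (h : E n → E n) (hdiff : IsDiffeo h)
    (hor : ∀ x, 0 < (fderiv ℝ h x).det) :
    ∃ H : E n × ℝ → E n,
      ContDiffOn ℝ (⊤ : ℕ∞) H ((univ : Set (E n)) ×ˢ Icc (0:ℝ) 1) ∧
      (∀ x, H (x, 0) = h x) ∧ (∀ x, H (x, 1) = x) ∧
      ∀ t ∈ Icc (0:ℝ) 1, IsDiffeo (fun x => H (x, t)) := by
  have hh : ContDiff ℝ ∞ h := hdiff.1
  obtain ⟨Γ, hΓ, hΓ0, hΓ1, hΓu⟩ := exists_contDiff_path_isUnit_of_det_pos _ (hor 0)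
  obtain ⟨A, hA⟩ := hΓu 0 (left_mem_Icc.mpr zero_le_one)
  set B : E n →L[ℝ] E n := ↑A⁻¹
  have hAB : ∀ y, Γ 0 (B y) = y := fun y => by rw [← hA]; exact congr($(A.mul_inv) y)
  have hBA : ∀ x, B (Γ 0 x) = x := fun x => by rw [← hA]; exact congr($(A.inv_mul) x)
  let H : E n × ℝ → E n := fun p =>
    Γ p.2 (B (linearizationHomotopy h (p.1, 1 - p.2))) + (1 - p.2) • h 0
  have hH1 : ∀ x, H (x, 1) = x := fun x => by
    simp [H, linearizationHomotopy_zero, hΓ1, ← hΓ0, hBA]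
  have hK := contDiff_linearizationHomotopy hh
  have hHsmooth : ContDiff ℝ ∞ H := by
    have := B.contDiff (n := ∞)
    fun_prop
  refine ⟨H, hHsmooth.contDiffOn, fun x => ?_, hH1, fun t ht => ?_⟩
  · simp [H, linearizationHomotopy_of_ne_zero (hh.of_le (by simp)), hAB]
  · rcases eq_or_ne t 1 with rfl | ht1
    · rw [show (fun x => H (x, 1)) = id from funext hH1]
      exact isDiffeo_id
    have hs : 1 - t ≠ 0 := sub_ne_zero.mpr ht1.symm
    have hslice : (fun x => H (x, t)) = (· + (1 - t) • h 0) ∘ Γ t ∘ B ∘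
        fun x => (1 - t)⁻¹ • (h ((1 - t) • x) - h 0) := by
      funext x
      simp [H, linearizationHomotopy_of_ne_zero (hh.of_le (by simp)) x hs]
    rw [hslice]
    exact (isDiffeo_add_const _).comp <| (isDiffeo_of_isUnit (hΓu t ht)).comp <|
      (isDiffeo_of_isUnit A⁻¹.isUnit).comp (hdiff.rescale hs)

/-- Every orientation-preserving diffeomorphism of `ℝⁿ` (the
determinant of its derivative is everywhere positive) is smoothly isotopic to the
identity. -/
theorem statement18 (n : ℕ) (hn : 1 ≤ n) (h : E n → E n) (hdiff : IsDiffeo h)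
    (hor : ∀ x, 0 < (fderiv ℝ h x).det) :
    ∃ H : E n × ℝ → E n,
      ContDiffOn ℝ (⊤ : ℕ∞) H ((univ : Set (E n)) ×ˢ Icc (0:ℝ) 1) ∧
      (∀ x, H (x, 0) = h x) ∧ (∀ x, H (x, 1) = x) ∧
      ∀ t ∈ Icc (0:ℝ) 1, IsDiffeo (fun x => H (x, t)) :=
  statement18_general n h hdiff hor
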